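/- Let W_{11}, Z^N, V_1^N, V_2^N, U^N, X_1^N be finite random variables such that X_1^N is independent of (V_1^N, V_2^N, U^N). Then H(W_{11} | Z^N, V_2^N, U^N) ≥ H(X_1^N) + H(V_1^N | U^N) − I(V_1^N ; V_2^N | U^N) − I(Z^N ; X_1^N, V_1^N | V_2^N, U^N) − H(V_1^N, X_1^N | W_{11}, Z^N, V_2^N, U^N). -/
import Mathlib


open Finset Real

namespace RBC

variable {Ω : Type*} [Fintype Ω]

/-- Probability that a random variable `X` takes value `a`, under pmf `p` on `Ω`. -/
noncomputable def prob {α : Type*} [DecidableEq α] (p : Ω → ℝ) (X : Ω → α) (a : α) : ℝ :=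
  ∑ ω ∈ Finset.univ.filter (fun ω => X ω = a), p ω

/-- Shannon entropy of a random variable with values in a finite type. -/
noncomputable def ent {α : Type*} [Fintype α] [DecidableEq α] (p : Ω → ℝ) (X : Ω → α) : ℝ :=
  -∑ a : α, prob p X a * Real.log (prob p X a)

/-- Conditional entropy H(X|Y). -/
noncomputable def condEnt {α β : Type*} [Fintype α] [DecidableEq α] [Fintype β] [DecidableEq β]
    (p : Ω → ℝ) (X : Ω → α) (Y : Ω → β) : ℝ :=
  ent p (fun ω => (X ω, Y ω)) - ent p Y

/-- Mutual information I(X;Y). -/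
noncomputable def mi {α β : Type*} [Fintype α] [DecidableEq α] [Fintype β] [DecidableEq β]
    (p : Ω → ℝ) (X : Ω → α) (Y : Ω → β) : ℝ :=
  ent p X + ent p Y - ent p (fun ω => (X ω, Y ω))

/-- Conditional mutual information I(X;Y|Z). -/
noncomputable def cmi {α β γ : Type*} [Fintype α] [DecidableEq α] [Fintype β] [DecidableEq β]
    [Fintype γ] [DecidableEq γ] (p : Ω → ℝ) (X : Ω → α) (Y : Ω → β) (Z : Ω → γ) : ℝ :=
  ent p (fun ω => (X ω, Z ω)) + ent p (fun ω => (Y ω, Z ω))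
    - ent p (fun ω => (X ω, Y ω, Z ω)) - ent p Z

/-- Independence of two random variables. -/
def Indep {α β : Type*} [DecidableEq α] [DecidableEq β]
    (p : Ω → ℝ) (X : Ω → α) (Y : Ω → β) : Prop :=
  ∀ a b, prob p (fun ω => (X ω, Y ω)) (a, b) = prob p X a * prob p Y b

/-- The prefix vector `(X 0, ..., X (i-1))` (0-based time), i.e. `X^{i-1}` in 1-based notation. -/
def pre {α : Type*} (X : ℕ → Ω → α) (i : ℕ) : Ω → (Fin i → α) :=
  fun ω j => X j ω

/-- The suffix vector `(X i, ..., X (N-1))` (0-based time), i.e. `X_{i+1}^{N}` in 1-based notation. -/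
def suf {α : Type*} (X : ℕ → Ω → α) (i N : ℕ) : Ω → (Fin (N - i) → α) :=
  fun ω j => X (i + j) ω


section AuxLemmas
lemma prob_nonneg {α : Type*} [DecidableEq α] (p : Ω → ℝ) (hp : ∀ ω, 0 ≤ p ω)
    (X : Ω → α) (a : α) : 0 ≤ prob p X a :=
  Finset.sum_nonneg fun ω _ => hp ω

lemma sum_prob {α : Type*} [Fintype α] [DecidableEq α] (p : Ω → ℝ) (X : Ω → α) :
    ∑ a : α, prob p X a = ∑ ω, p ω :=
  Finset.sum_fiberwise Finset.univ X p

lemma prob_comp_inj {α β : Type*} [DecidableEq α] [DecidableEq β]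
    (p : Ω → ℝ) (X : Ω → α) (f : α → β) (hf : Function.Injective f) (a : α) :
    prob p (fun ω => f (X ω)) (f a) = prob p X a := by
  unfold prob
  congr 1
  ext ω
  simp [hf.eq_iff]

lemma prob_comp_notmem {α β : Type*} [Fintype α] [DecidableEq α] [DecidableEq β]
    (p : Ω → ℝ) (X : Ω → α) (f : α → β) (b : β)
    (hb : b ∉ Finset.univ.image f) :
    prob p (fun ω => f (X ω)) b = 0 := by
  unfold prob
  rw [Finset.sum_eq_zero]
  intro ω hω
  simp only [Finset.mem_filter] at hω
  exact absurd (hω.2 ▸ Finset.mem_image_of_mem f (Finset.mem_univ (X ω))) hb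

lemma ent_comp_inj {α β : Type*} [Fintype α] [DecidableEq α] [Fintype β] [DecidableEq β]
    (p : Ω → ℝ) (X : Ω → α) (f : α → β) (hf : Function.Injective f) :
    ent p (fun ω => f (X ω)) = ent p X := by
  unfold ent
  congr 1
  rw [← Finset.sum_subset (Finset.subset_univ ((Finset.univ : Finset α).image f))
      (fun b _ hb => by rw [prob_comp_notmem p X f b hb]; simp),
    Finset.sum_image (fun a _ a' _ h => hf h)]
  exact Finset.sum_congr rfl fun a _ => by rw [prob_comp_inj p X f hf]

lemma sum_prob_pair {α β : Type*} [Fintype α] [DecidableEq α] [DecidableEq β]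
    (p : Ω → ℝ) (X : Ω → α) (Y : Ω → β) (b : β) :
    ∑ a : α, prob p (fun ω => (X ω, Y ω)) (a, b) = prob p Y b := by
  unfold prob
  rw [← Finset.sum_fiberwise (Finset.univ.filter fun ω => Y ω = b) X p]
  refine Finset.sum_congr rfl fun a _ => ?_
  congr 1
  ext ω
  simp [Prod.ext_iff, and_comm]

lemma prob_pair_le {α β : Type*} [DecidableEq α] [DecidableEq β]
    (p : Ω → ℝ) (hp : ∀ ω, 0 ≤ p ω) (X : Ω → α) (Y : Ω → β) (a : α) (b : β) :
    prob p (fun ω => (X ω, Y ω)) (a, b) ≤ prob p Y b := by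
  apply Finset.sum_le_sum_of_subset_of_nonneg
  · intro ω hω
    simp only [Finset.mem_filter, Prod.ext_iff] at hω ⊢
    exact ⟨hω.1, hω.2.2⟩
  · exact fun ω _ _ => hp ω

lemma ent_pair_ge_right {α β : Type*} [Fintype α] [DecidableEq α] [Fintype β] [DecidableEq β]
    (p : Ω → ℝ) (hp : ∀ ω, 0 ≤ p ω) (X : Ω → α) (Y : Ω → β) :
    ent p (fun ω => (X ω, Y ω)) ≥ ent p Y := by
  unfold ent
  rw [ge_iff_le, neg_le_neg_iff]
  calc ∑ c : α × β, prob p (fun ω => (X ω, Y ω)) c * Real.log (prob p (fun ω => (X ω, Y ω)) c)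
      ≤ ∑ c : α × β, prob p (fun ω => (X ω, Y ω)) c * Real.log (prob p Y c.2) := by
        refine Finset.sum_le_sum fun c _ => ?_
        rcases eq_or_lt_of_le (prob_nonneg p hp (fun ω => (X ω, Y ω)) c) with h | h
        · rw [← h]; simp
        · refine mul_le_mul_of_nonneg_left (Real.log_le_log h ?_) h.le
          obtain ⟨a, b⟩ := c
          exact prob_pair_le p hp X Y a b
    _ = ∑ b : β, prob p Y b * Real.log (prob p Y b) := by
        rw [Fintype.sum_prod_type_right]
        refine Finset.sum_congr rfl fun b _ => ?_
        show ∑ a : α, prob p (fun ω => (X ω, Y ω)) (a, b) * Real.log (prob p Y b) = _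
        rw [← Finset.sum_mul, sum_prob_pair]

lemma ent_indep {α β : Type*} [Fintype α] [DecidableEq α] [Fintype β] [DecidableEq β]
    (p : Ω → ℝ) (hsum : ∑ ω, p ω = 1) (X : Ω → α) (Y : Ω → β)
    (h : ∀ a b, prob p (fun ω => (X ω, Y ω)) (a, b) = prob p X a * prob p Y b) :
    ent p (fun ω => (X ω, Y ω)) = ent p X + ent p Y := by
  unfold ent
  rw [Fintype.sum_prod_type]
  have key : ∀ a b, prob p X a * prob p Y b * Real.log (prob p X a * prob p Y b)
      = prob p Y b * (prob p X a * Real.log (prob p X a))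
        + prob p X a * (prob p Y b * Real.log (prob p Y b)) := by
    intro a b
    by_cases ha : prob p X a = 0
    · simp [ha]
    by_cases hb : prob p Y b = 0
    · simp [hb]
    rw [Real.log_mul ha hb]; ring
  calc -∑ a, ∑ b, prob p (fun ω => (X ω, Y ω)) (a, b)
          * Real.log (prob p (fun ω => (X ω, Y ω)) (a, b))
      = -∑ a, ∑ b, (prob p Y b * (prob p X a * Real.log (prob p X a))
          + prob p X a * (prob p Y b * Real.log (prob p Y b))) := by
        congr 1
        exact Finset.sum_congr rfl fun a _ => Finset.sum_congr rfl fun b _ => by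
          rw [h a b, key a b]
    _ = -∑ a, ((∑ b, prob p Y b) * (prob p X a * Real.log (prob p X a))
          + prob p X a * ∑ b, prob p Y b * Real.log (prob p Y b)) := by
        congr 1
        refine Finset.sum_congr rfl fun a _ => ?_
        rw [Finset.sum_add_distrib, ← Finset.sum_mul, ← Finset.mul_sum]
    _ = -((∑ b, prob p Y b) * ∑ a, prob p X a * Real.log (prob p X a)
          + (∑ a, prob p X a) * ∑ b, prob p Y b * Real.log (prob p Y b)) := by
        rw [Finset.sum_add_distrib, ← Finset.mul_sum, ← Finset.sum_mul]
    _ = _ := by rw [sum_prob, sum_prob, hsum]; ring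

end AuxLemmas

set_option maxHeartbeats 2000000 in
/-- Equivocation chain used in the noise-forward achievability proof, where the relay
codeword `X₁^N` is independent of `(V₁^N, V₂^N, U^N)`. -/
theorem nf_equivocation_decomposition
    {𝒲 𝒵 𝒱₁ 𝒱₂ 𝒰 𝒳₁ : Type*}
    [Fintype 𝒲] [DecidableEq 𝒲] [Fintype 𝒵] [DecidableEq 𝒵]
    [Fintype 𝒱₁] [DecidableEq 𝒱₁] [Fintype 𝒱₂] [DecidableEq 𝒱₂]
    [Fintype 𝒰] [DecidableEq 𝒰] [Fintype 𝒳₁] [DecidableEq 𝒳₁]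
    (p : Ω → ℝ) (hp : ∀ ω, 0 ≤ p ω) (hsum : ∑ ω, p ω = 1)
    (W₁₁ : Ω → 𝒲) (Z : Ω → 𝒵) (V₁ : Ω → 𝒱₁) (V₂ : Ω → 𝒱₂) (U : Ω → 𝒰) (X₁ : Ω → 𝒳₁)
    (hindep : Indep p X₁ (fun ω => (V₁ ω, V₂ ω, U ω))) :
    condEnt p W₁₁ (fun ω => (Z ω, V₂ ω, U ω))
      ≥ ent p X₁ + condEnt p V₁ U
        - cmi p V₁ V₂ U
        - cmi p Z (fun ω => (X₁ ω, V₁ ω)) (fun ω => (V₂ ω, U ω))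
        - condEnt p (fun ω => (V₁ ω, X₁ ω)) (fun ω => (W₁₁ ω, Z ω, V₂ ω, U ω)) := by
  have hinj1 : Function.Injective
      (fun t : 𝒳₁ × 𝒱₁ × 𝒱₂ × 𝒰 => ((t.1, t.2.1), (t.2.2.1, t.2.2.2))) := by
    intro x y h
    simp only [Prod.mk.injEq] at h
    simp [Prod.ext_iff]
    tauto
  have hinj3 : Function.Injective
      (fun t : 𝒵 × 𝒳₁ × 𝒱₁ × 𝒱₂ × 𝒰 =>
        (t.1, (t.2.1, t.2.2.1), (t.2.2.2.1, t.2.2.2.2))) := by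
    intro x y h
    simp only [Prod.mk.injEq] at h
    simp [Prod.ext_iff]
    tauto
  have hinj4 : Function.Injective
      (fun t : 𝒲 × 𝒵 × 𝒳₁ × 𝒱₁ × 𝒱₂ × 𝒰 =>
        ((t.2.2.2.1, t.2.2.1), (t.1, t.2.1, t.2.2.2.2.1, t.2.2.2.2.2))) := by
    intro x y h
    simp only [Prod.mk.injEq] at h
    simp [Prod.ext_iff]
    tauto
  have e1 : ent p (fun ω => ((X₁ ω, V₁ ω), (V₂ ω, U ω)))
      = ent p (fun ω => (X₁ ω, V₁ ω, V₂ ω, U ω)) :=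
    ent_comp_inj p (fun ω => (X₁ ω, V₁ ω, V₂ ω, U ω)) (fun t => ((t.1, t.2.1), (t.2.2.1, t.2.2.2))) hinj1
  have e2 : ent p (fun ω => (X₁ ω, V₁ ω, V₂ ω, U ω))
      = ent p X₁ + ent p (fun ω => (V₁ ω, V₂ ω, U ω)) :=
    ent_indep p hsum X₁ _ hindep
  have e3 : ent p (fun ω => (Z ω, (X₁ ω, V₁ ω), (V₂ ω, U ω)))
      = ent p (fun ω => (Z ω, X₁ ω, V₁ ω, V₂ ω, U ω)) :=
    ent_comp_inj p (fun ω => (Z ω, X₁ ω, V₁ ω, V₂ ω, U ω)) (fun t => (t.1, (t.2.1, t.2.2.1), (t.2.2.2.1, t.2.2.2.2))) hinj3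
  have e4 : ent p (fun ω => ((V₁ ω, X₁ ω), (W₁₁ ω, Z ω, V₂ ω, U ω)))
      = ent p (fun ω => (W₁₁ ω, Z ω, X₁ ω, V₁ ω, V₂ ω, U ω)) :=
    ent_comp_inj p (fun ω => (W₁₁ ω, Z ω, X₁ ω, V₁ ω, V₂ ω, U ω)) (fun t => ((t.2.2.2.1, t.2.2.1), (t.1, t.2.1, t.2.2.2.2.1, t.2.2.2.2.2))) hinj4
  have e5 : ent p (fun ω => (W₁₁ ω, Z ω, X₁ ω, V₁ ω, V₂ ω, U ω))
      ≥ ent p (fun ω => (Z ω, X₁ ω, V₁ ω, V₂ ω, U ω)) :=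
    ent_pair_ge_right p hp W₁₁ _
  simp only [condEnt, cmi] at *
  linarith

end RBC
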